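/- Let p ≥ 1 and n ≥ 0 be integers and let v, w ∈ (ℤ/pℤ)^n. Let s = type(v) and t = type(w). Then multinomial(n; s) · |{u ∈ (ℤ/pℤ)^n : type(u) = t and u·v = 0}| = multinomial(n; t) · |{u ∈ (ℤ/pℤ)^n : type(u) = s and u·w = 0}|, where u·v denotes the standard inner product in ℤ/pℤ. -/
import Mathlib


/-- The type of a vector `v ∈ (ℤ/pℤ)^n`: for each `k ∈ ℤ/pℤ`, the number of
coordinates of `v` equal to `k`. -/
def typeOf {p n : ℕ} (v : Fin n → ZMod p) (k : ZMod p) : ℕ :=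
  (Finset.univ.filter fun i => v i = k).card

open Finset

lemma typeOf_comp {p n : ℕ} (v : Fin n → ZMod p) (σ : Equiv.Perm (Fin n)) (k : ZMod p) :
    typeOf (v ∘ σ) k = typeOf v k := by
  unfold typeOf
  apply Finset.card_bij (fun i _ => σ i)
  · intro a ha; simp only [mem_filter, mem_univ, true_and, Function.comp_apply] at ha ⊢; exact ha
  · intro a _ b _ h; exact σ.injective h
  · intro b hb
    refine ⟨σ.symm b, ?_, by simp⟩
    simp only [mem_filter, mem_univ, true_and, Function.comp_apply, Equiv.apply_symm_apply] at hb ⊢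
    exact hb

lemma exists_perm_of_typeOf_eq {p n : ℕ} {a b : Fin n → ZMod p}
    (h : ∀ k, typeOf a k = typeOf b k) : ∃ σ : Equiv.Perm (Fin n), a = b ∘ σ := by
  have hcard : ∀ k, Fintype.card {i // a i = k} = Fintype.card {i // b i = k} := by
    intro k
    simpa [Fintype.card_subtype, typeOf] using h k
  let e : ∀ k, {i // a i = k} ≃ {i // b i = k} := fun k => Fintype.equivOfCardEq (hcard k)
  refine ⟨Equiv.ofFiberEquiv e, ?_⟩
  funext i
  exact (Equiv.ofFiberEquiv_map e i).symm

/-- The number of vectors of the same type as `v` is the multinomial coefficient. -/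
lemma card_typeClass {p : ℕ} [NeZero p] {n : ℕ} (v : Fin n → ZMod p) :
    (Finset.univ.filter fun a : Fin n → ZMod p => ∀ k, typeOf a k = typeOf v k).card =
      Nat.multinomial Finset.univ (typeOf v) := by
  classical
  set C := Finset.univ.filter fun a : Fin n → ZMod p => ∀ k, typeOf a k = typeOf v k with hC
  have hsum : ∑ k, typeOf v k = n := by
    have h := Finset.card_eq_sum_card_fiberwise
      (s := (Finset.univ : Finset (Fin n))) (t := Finset.univ) (f := v)
      (fun i _ => Finset.mem_univ (v i))
    simpa [typeOf] using h.symm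
  -- stabilizer size
  have hstab : (Finset.univ.filter fun σ : Equiv.Perm (Fin n) => v ∘ σ = v).card
      = ∏ k, Nat.factorial (typeOf v k) := by
    rw [← Fintype.card_subtype, DomMulAct.stabilizer_card]
    exact Finset.prod_congr rfl fun k _ => by simp [Fintype.card_subtype, typeOf]
  -- fiber of σ ↦ v ∘ σ over any a of the same type has size ∏ (typeOf v k)!
  have hfiber : ∀ a ∈ C,
      (Finset.univ.filter fun σ : Equiv.Perm (Fin n) => v ∘ σ = a).card
        = ∏ k, Nat.factorial (typeOf v k) := by
    intro a ha
    rw [hC, Finset.mem_filter] at ha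
    obtain ⟨τ, hτ⟩ := exists_perm_of_typeOf_eq ha.2
    rw [← hstab]
    apply Finset.card_bij (fun σ _ => σ * τ⁻¹)
    · intro σ hσ
      simp only [mem_filter, mem_univ, true_and] at hσ ⊢
      funext i
      have := congrFun hσ ((τ⁻¹ : Equiv.Perm (Fin n)) i)
      simp only [Function.comp_apply] at this ⊢
      rw [Equiv.Perm.mul_apply, this, hτ]
      simp
    · intro σ₁ _ σ₂ _ h; exact mul_right_cancel h
    · intro ρ hρ
      simp only [mem_filter, mem_univ, true_and] at hρ
      refine ⟨ρ * τ, Finset.mem_filter.mpr ⟨Finset.mem_univ _, ?_⟩, by group⟩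
      funext i
      have := congrFun hρ (τ i)
      simp only [Function.comp_apply] at this ⊢
      rw [Equiv.Perm.mul_apply, this, hτ]
      rfl
  -- v ∘ σ always lands in C
  have hmem : ∀ σ : Equiv.Perm (Fin n), v ∘ σ ∈ C := fun σ =>
    Finset.mem_filter.mpr ⟨Finset.mem_univ _, typeOf_comp v σ⟩
  have hdouble : Nat.factorial n = ∑ a ∈ C, (Finset.univ.filter
      fun σ : Equiv.Perm (Fin n) => v ∘ σ = a).card := by
    have hcard : (Finset.univ : Finset (Equiv.Perm (Fin n))).card = Nat.factorial n := by
      simp [Finset.card_univ, Fintype.card_perm]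
    rw [← hcard]
    exact Finset.card_eq_sum_card_fiberwise (fun σ _ => hmem σ)
  rw [Finset.sum_congr rfl hfiber, Finset.sum_const, smul_eq_mul] at hdouble
  have hspec := Nat.multinomial_spec Finset.univ (typeOf v)
  rw [hsum] at hspec
  have hne : 0 < ∏ k, Nat.factorial (typeOf v k) :=
    Finset.prod_pos fun k _ => Nat.factorial_pos _
  apply Nat.eq_of_mul_eq_mul_right hne
  exact hdouble.symm.trans (hspec.symm.trans (mul_comm _ _))

/-- Invariance of the count under permuting the fixed vector. -/
lemma count_comp {p : ℕ} [NeZero p] {n : ℕ} (t : ZMod p → ℕ) (x : Fin n → ZMod p) (σ : Equiv.Perm (Fin n)) :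
    (Finset.univ.filter fun u : Fin n → ZMod p =>
        (∀ k, typeOf u k = t k) ∧ (∑ i, u i * (x ∘ σ) i) = 0).card =
    (Finset.univ.filter fun u : Fin n → ZMod p =>
        (∀ k, typeOf u k = t k) ∧ (∑ i, u i * x i) = 0).card := by
  classical
  apply Finset.card_bij (fun u _ => u ∘ σ.symm)
  · intro u hu
    simp only [mem_filter, mem_univ, true_and] at hu ⊢
    refine ⟨fun k => (typeOf_comp u σ.symm k).trans (hu.1 k), ?_⟩
    rw [← hu.2, ← Equiv.sum_comp σ (fun i => (u ∘ σ.symm) i * x i)]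
    simp
  · intro u₁ _ u₂ _ h
    funext i
    have := congrFun h (σ i)
    simpa using this
  · intro b hb
    simp only [mem_filter, mem_univ, true_and] at hb
    refine ⟨b ∘ σ, Finset.mem_filter.mpr ⟨Finset.mem_univ _, ?_, ?_⟩, by funext i; simp⟩
    · intro k; rw [typeOf_comp]; exact hb.1 k
    · rw [← hb.2, ← Equiv.sum_comp σ (fun i => b i * x i)]
      simp

lemma ite_sum_nat {β : Type*} (s : Finset β) (P : Prop) [Decidable P] (f : β → ℕ) :
    (if P then ∑ b ∈ s, f b else 0) = ∑ b ∈ s, if P then f b else 0 := by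
  split <;> simp

theorem duality_count (p : ℕ) [NeZero p] (n : ℕ) (v w : Fin n → ZMod p) :
    Nat.multinomial Finset.univ (typeOf v) *
      (Finset.univ.filter fun u : Fin n → ZMod p =>
        (∀ k : ZMod p, typeOf u k = typeOf w k) ∧ (∑ i, u i * v i) = 0).card =
    Nat.multinomial Finset.univ (typeOf w) *
      (Finset.univ.filter fun u : Fin n → ZMod p =>
        (∀ k : ZMod p, typeOf u k = typeOf v k) ∧ (∑ i, u i * w i) = 0).card := by
  classical
  -- double counting pairs (a, b) with type a = type v, type b = type w, a·b = 0
  have key : ∑ a ∈ (Finset.univ.filter fun a : Fin n → ZMod p =>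
        ∀ k, typeOf a k = typeOf v k),
      (Finset.univ.filter fun b : Fin n → ZMod p =>
        (∀ k, typeOf b k = typeOf w k) ∧ (∑ i, b i * a i) = 0).card
      = ∑ b ∈ (Finset.univ.filter fun b : Fin n → ZMod p =>
        ∀ k, typeOf b k = typeOf w k),
      (Finset.univ.filter fun a : Fin n → ZMod p =>
        (∀ k, typeOf a k = typeOf v k) ∧ (∑ i, a i * b i) = 0).card := by
    simp only [Finset.card_filter, Finset.sum_filter, ite_sum_nat]
    rw [Finset.sum_comm]
    apply Finset.sum_congr rfl
    intro b _
    apply Finset.sum_congr rfl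
    intro a _
    by_cases hb : ∀ k, typeOf b k = typeOf w k <;>
      by_cases ha : ∀ k, typeOf a k = typeOf v k <;>
      by_cases hd : (∑ i, a i * b i) = 0 <;>
      simp [ha, hb, hd, mul_comm]
  -- each inner sum is constant on the class
  have hleft : ∀ a ∈ (Finset.univ.filter fun a : Fin n → ZMod p =>
        ∀ k, typeOf a k = typeOf v k),
      (Finset.univ.filter fun b : Fin n → ZMod p =>
        (∀ k, typeOf b k = typeOf w k) ∧ (∑ i, b i * a i) = 0).card
      = (Finset.univ.filter fun u : Fin n → ZMod p =>
        (∀ k, typeOf u k = typeOf w k) ∧ (∑ i, u i * v i) = 0).card := by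
    intro a ha
    obtain ⟨σ, hσ⟩ := exists_perm_of_typeOf_eq (Finset.mem_filter.mp ha).2
    rw [hσ]
    exact count_comp (typeOf w) v σ
  have hright : ∀ b ∈ (Finset.univ.filter fun b : Fin n → ZMod p =>
        ∀ k, typeOf b k = typeOf w k),
      (Finset.univ.filter fun a : Fin n → ZMod p =>
        (∀ k, typeOf a k = typeOf v k) ∧ (∑ i, a i * b i) = 0).card
      = (Finset.univ.filter fun u : Fin n → ZMod p =>
        (∀ k, typeOf u k = typeOf v k) ∧ (∑ i, u i * w i) = 0).card := by
    intro b hb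
    obtain ⟨σ, hσ⟩ := exists_perm_of_typeOf_eq (Finset.mem_filter.mp hb).2
    rw [hσ]
    exact count_comp (typeOf v) w σ
  rw [Finset.sum_congr rfl hleft, Finset.sum_congr rfl hright,
    Finset.sum_const, Finset.sum_const, smul_eq_mul, smul_eq_mul,
    card_typeClass, card_typeClass] at key
  exact key
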